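/- Let n ≥ 2 be an integer and let f₁(r) = −1 + Σ_{m=1}^∞ [m·(2m−2)! / (2^{3m−1}·(m!)²·∏_{j=0}^{m−1}(n+2j))]·r^{2m}. Then there exists R > 0 such that f₁(r) > e^{r²/8} for all r > R. -/

import Mathlib

noncomputable def hplaneCoef (n m : ℕ) : ℝ :=
  ((m : ℝ) * (Nat.factorial (2*m - 2) : ℝ)) /
    ((2:ℝ)^(3*m - 1) * ((Nat.factorial m : ℝ))^2 *
      ∏ j ∈ Finset.range m, ((n : ℝ) + 2*(j : ℝ)))

noncomputable def fOne (n : ℕ) (r : ℝ) : ℝ :=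
  -1 + ∑' m : ℕ, hplaneCoef n (m+1) * r^(2*(m+1))

/-!
Put `x = r²/8`. The coefficient of `x^m/m!` in `f₁` is `ρ_m = 8^m m! a_m`
(`hplaneCoefRatio n m`), where `a_m` is the coefficient of `r^{2m}`, and
`ρ_{m+1} = 2(2m-1)/(n+2m) · ρ_m`. The ratio is at most `2`, so `ρ_m ≤ 2^m` and the series
converges; it tends to `2 > 1`, so `ρ_m → ∞` and `ρ_m ≥ 2` for `m ≥ M`. Comparing with the
exponential series termwise from `M` on gives `f₁(r) ≥ 2(e^x - Σ_{m<M} x^m/m!) - 1`, which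
exceeds `e^x` once `e^x` dominates the polynomial.
-/

open Filter Finset Asymptotics Nat

theorem tendsto_atTop_of_mul_le_succ {u : ℕ → ℝ} {c : ℝ} {N : ℕ} (hc : 1 < c)
    (hN : 0 < u N) (hu : ∀ k ≥ N, c * u k ≤ u (k + 1)) : Tendsto u atTop atTop := by
  have hgeom : ∀ j, u N * c ^ j ≤ u (j + N) := by
    intro j
    induction j with
    | zero => simp
    | succ j ih =>
      calc u N * c ^ (j + 1) = c * (u N * c ^ j) := by ring
        _ ≤ c * u (j + N) := by gcongr
        _ ≤ u (j + 1 + N) := by rw [add_right_comm]; exact hu _ (by omega)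
  rw [← tendsto_add_atTop_iff_nat N]
  exact tendsto_atTop_mono hgeom ((tendsto_pow_atTop_atTop_of_one_lt hc).const_mul_atTop hN)

theorem sub_sum_range_le_tsum {t v : ℕ → ℝ} (ht : Summable t) (hv : Summable v)
    (ht0 : ∀ m, 0 ≤ t m) {M : ℕ} (hvt : ∀ m ≥ M, v m ≤ t m) :
    ∑' m, v m - ∑ m ∈ range M, v m ≤ ∑' m, t m := by
  rw [← hv.sum_add_tsum_nat_add M, ← ht.sum_add_tsum_nat_add M, add_sub_cancel_left]
  have htail : ∑' m, v (m + M) ≤ ∑' m, t (m + M) :=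
    ((summable_nat_add_iff M).2 hv).tsum_le_tsum (fun m => hvt _ (by omega))
      ((summable_nat_add_iff M).2 ht)
  linarith [sum_nonneg fun m (_ : m ∈ range M) => ht0 m]

theorem eventually_add_mul_sum_pow_div_factorial_lt_exp (a b : ℝ) (M : ℕ) :
    ∀ᶠ x : ℝ in atTop, a + b * ∑ m ∈ range M, x ^ m / m ! < Real.exp x := by
  have ho : (fun x : ℝ => a + b * ∑ m ∈ range M, x ^ m / m !) =o[atTop] Real.exp := by
    refine .add ?_ (.const_mul_left (.fun_sum fun m _ => ?_) b)
    · simpa using (Real.isLittleO_pow_exp_atTop (n := 0)).const_mul_left a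
    · simpa [div_eq_mul_inv, mul_comm] using
        (Real.isLittleO_pow_exp_atTop (n := m)).const_mul_left ((m ! : ℝ)⁻¹)
  filter_upwards [ho.def one_half_pos] with x hx
  rw [Real.norm_of_nonneg (Real.exp_pos x).le, Real.norm_eq_abs] at hx
  linarith [le_abs_self (a + b * ∑ m ∈ range M, x ^ m / m !), Real.exp_pos x]

noncomputable def hplaneCoefRatio (n m : ℕ) : ℝ := hplaneCoef n m * 8 ^ m * m !

theorem hplaneCoefRatio_succ (n k : ℕ) :
    hplaneCoefRatio n (k + 1) =
      2 * (2 * k)! / k ! * (∏ j ∈ range (k + 1), ((n : ℝ) + 2 * j))⁻¹ := by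
  have h1 : 2 * (k + 1) - 2 = 2 * k := by omega
  have h2 : 3 * (k + 1) - 1 = 3 * k + 2 := by omega
  have h8 : (2 : ℝ) ^ (3 * k + 2) = 8 ^ k * 4 := by rw [pow_add, pow_mul]; norm_num
  simp only [hplaneCoefRatio, hplaneCoef, h1, h2, h8, div_eq_mul_inv, mul_inv, factorial_succ]
  push_cast
  field_simp
  ring

theorem hplaneCoefRatio_succ_succ (n k : ℕ) :
    hplaneCoefRatio n (k + 2) = 2 * (2 * k + 1) / (n + 2 * k + 2) * hplaneCoefRatio n (k + 1) := by
  rw [hplaneCoefRatio_succ, hplaneCoefRatio_succ, prod_range_succ _ (k + 1),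
    show 2 * (k + 1) = 2 * k + 1 + 1 by ring, factorial_succ, factorial_succ, factorial_succ]
  push_cast
  field_simp
  ring

theorem hplaneCoefRatio_zero (n : ℕ) : hplaneCoefRatio n 0 = 0 := by
  simp [hplaneCoefRatio, hplaneCoef]

theorem hplaneCoefRatio_one (n : ℕ) : hplaneCoefRatio n 1 = 2 / n := by
  simp [hplaneCoefRatio_succ, div_eq_mul_inv]

theorem hplaneCoefRatio_nonneg (n m : ℕ) : 0 ≤ hplaneCoefRatio n m := by
  unfold hplaneCoefRatio hplaneCoef
  positivity

theorem hplaneCoefRatio_succ_pos {n : ℕ} (hn : 0 < n) (k : ℕ) :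
    0 < hplaneCoefRatio n (k + 1) := by
  rw [hplaneCoefRatio_succ]
  have : 0 < ∏ j ∈ range (k + 1), ((n : ℝ) + 2 * j) :=
    prod_pos fun j _ => by positivity
  positivity

theorem hplaneCoefRatio_le_two_pow {n : ℕ} (hn : 0 < n) (m : ℕ) :
    hplaneCoefRatio n m ≤ 2 ^ m := by
  obtain _ | k := m
  · simp [hplaneCoefRatio_zero]
  induction k with
  | zero =>
    rw [hplaneCoefRatio_one, div_le_iff₀ (by positivity)]
    norm_num
    exact_mod_cast hn
  | succ k ih =>
    rw [hplaneCoefRatio_succ_succ, pow_succ, mul_comm (2 ^ _)]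
    have hratio : 2 * (2 * (k : ℝ) + 1) / (n + 2 * k + 2) ≤ 2 := by
      rw [div_le_iff₀ (by positivity)]
      linarith [(n.cast_nonneg : (0 : ℝ) ≤ n)]
    exact mul_le_mul hratio ih (hplaneCoefRatio_nonneg n _) zero_le_two

theorem tendsto_hplaneCoefRatio {n : ℕ} (hn : 0 < n) :
    Tendsto (hplaneCoefRatio n) atTop atTop := by
  refine tendsto_atTop_of_mul_le_succ (c := 3 / 2) (N := 2 * n + 2) (by norm_num)
    (hplaneCoefRatio_succ_pos hn _) fun k hk => ?_
  obtain ⟨j, rfl⟩ : ∃ j, k = j + 1 := ⟨k - 1, by omega⟩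
  rw [hplaneCoefRatio_succ_succ]
  have hratio : 3 / 2 ≤ 2 * (2 * (j : ℝ) + 1) / (n + 2 * j + 2) := by
    rw [le_div_iff₀ (by positivity)]
    have : (2 * n + 1 : ℝ) ≤ j := by exact_mod_cast (by omega : 2 * n + 1 ≤ j)
    linarith
  exact mul_le_mul_of_nonneg_right hratio (hplaneCoefRatio_nonneg n _)

theorem hplaneCoef_mul_pow (n m : ℕ) (r : ℝ) :
    hplaneCoef n m * r ^ (2 * m) = hplaneCoefRatio n m * (r ^ 2 / 8) ^ m / m ! := by
  rw [hplaneCoefRatio, pow_mul, div_pow]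
  field_simp

theorem summable_hplaneCoefRatio_mul_pow {n : ℕ} (hn : 0 < n) {x : ℝ} (hx : 0 ≤ x) :
    Summable fun m => hplaneCoefRatio n m * x ^ m / m ! := by
  refine (Real.summable_pow_div_factorial (2 * x)).of_nonneg_of_le
    (fun m => by have := hplaneCoefRatio_nonneg n m; positivity) fun m => ?_
  rw [mul_pow]
  gcongr
  exact hplaneCoefRatio_le_two_pow hn m

theorem fOne_eq_tsum {n : ℕ} (hn : 0 < n) (r : ℝ) :
    fOne n r = -1 + ∑' m, hplaneCoefRatio n m * (r ^ 2 / 8) ^ m / m ! := by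
  rw [(summable_hplaneCoefRatio_mul_pow hn (by positivity)).tsum_eq_zero_add, fOne]
  simp [hplaneCoefRatio_zero, hplaneCoef_mul_pow]

theorem two_mul_exp_sub_le_fOne {n : ℕ} (hn : 0 < n) {M : ℕ}
    (hM : ∀ m ≥ M, 2 ≤ hplaneCoefRatio n m) (r : ℝ) :
    2 * (Real.exp (r ^ 2 / 8) - ∑ m ∈ range M, (r ^ 2 / 8) ^ m / m !) - 1 ≤ fOne n r := by
  set x := r ^ 2 / 8
  have hx : 0 ≤ x := by positivity
  have hexp : Real.exp x = ∑' m, x ^ m / m ! := by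
    rw [Real.exp_eq_exp_ℝ, NormedSpace.exp_eq_tsum_div]
  have key := sub_sum_range_le_tsum (summable_hplaneCoefRatio_mul_pow hn hx)
    ((Real.summable_pow_div_factorial x).mul_left 2)
    (fun m => by have := hplaneCoefRatio_nonneg n m; positivity)
    (v := fun m => 2 * (x ^ m / m !)) (M := M)
    fun m hm => by rw [mul_div_assoc]; gcongr; exact hM m hm
  rw [tsum_mul_left, ← mul_sum, ← hexp] at key
  rw [fOne_eq_tsum hn]
  linarith

/-- There exists `R > 0` such that `f₁(r) > e^{r²/8}` for all `r > R`. -/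
theorem stmt17 (n : ℕ) (hn : 2 ≤ n) :
    ∃ R : ℝ, 0 < R ∧ ∀ r : ℝ, R < r → Real.exp (r^2/8) < fOne n r := by
  have hn0 : 0 < n := by omega
  obtain ⟨M, hM⟩ := eventually_atTop.1 ((tendsto_hplaneCoefRatio hn0).eventually_ge_atTop 2)
  have hx : Tendsto (fun r : ℝ => r ^ 2 / 8) atTop atTop :=
    (tendsto_pow_atTop two_ne_zero).atTop_div_const (by norm_num)
  obtain ⟨R, hR⟩ :=
    eventually_atTop.1 (hx.eventually (eventually_add_mul_sum_pow_div_factorial_lt_exp 1 2 M))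
  refine ⟨max R 1, by positivity, fun r hr => ?_⟩
  have hexp := hR r (le_max_left R 1 |>.trans hr.le)
  have hlow := two_mul_exp_sub_le_fOne hn0 hM r
  linarith
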